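/- arXiv:1905.06839 — 2 statements merged into one kernel-verified Lean document; each statement's English description precedes it below -/
import Mathlib

section
/- Composite Simpson's rule with error term: if $y \in C^4[0,t_f]$, $n$ is even, $h = t_f/n$, and $t_j = jh$, then there exists $\mu \in (0, t_f)$ such that $\int_0^{t_f} y(t)\,dt = \frac{h}{3}\left[y(0) + 2\sum_{j=1}^{n/2-1} y(t_{2j}) + 4\sum_{j=1}^{n/2} y(t_{2j-1}) + y(t_f)\right] - \frac{t_f}{180} h^4 y^{(4)}(\mu)$. -/
open Set

private lemma iterWithin_eq_iter {f : ℝ → ℝ} {s : Set ℝ} (hs : IsOpen s) {x : ℝ} (hx : x ∈ s)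
    (n : ℕ) : iteratedDerivWithin n f s x = iteratedDeriv n f x := by
  rw [iteratedDerivWithin_eq_iteratedFDerivWithin, iteratedDeriv_eq_iteratedFDeriv,
    iteratedFDerivWithin_of_isOpen n hs hx]

private lemma within_Icc_eq_interior {y : ℝ → ℝ} {a b x : ℝ} (hx : x ∈ Ioo a b) (n : ℕ) :
    iteratedDerivWithin n y (Icc a b) x = iteratedDeriv n y x := by
  rw [iteratedDerivWithin_eq_iteratedFDerivWithin, iteratedDeriv_eq_iteratedFDeriv]
  have h1 : iteratedFDerivWithin ℝ n y (Icc a b ∩ Ioo a b) x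
      = iteratedFDerivWithin ℝ n y (Icc a b) x :=
    iteratedFDerivWithin_inter (isOpen_Ioo.mem_nhds hx)
  rw [← h1, Set.inter_eq_self_of_subset_right Set.Ioo_subset_Icc_self,
    iteratedFDerivWithin_of_isOpen n isOpen_Ioo hx]

private lemma hasDerivAt_iterDeriv {f : ℝ → ℝ} {s : Set ℝ} (hs : IsOpen s)
    (hf : ContDiffOn ℝ 4 f s) {m : ℕ} (hm : m < 4) {x : ℝ} (hx : x ∈ s) :
    HasDerivAt (iteratedDeriv m f) (iteratedDeriv (m + 1) f x) x := by
  have hu : UniqueDiffOn ℝ s := hs.uniqueDiffOn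
  have h1 : DifferentiableWithinAt ℝ (iteratedDerivWithin m f s) s x :=
    hf.differentiableOn_iteratedDerivWithin (by exact_mod_cast hm) hu x hx
  have h2 : DifferentiableAt ℝ (iteratedDerivWithin m f s) x :=
    h1.differentiableAt (hs.mem_nhds hx)
  have heq : iteratedDeriv m f =ᶠ[nhds x] iteratedDerivWithin m f s :=
    Filter.eventuallyEq_of_mem (hs.mem_nhds hx) fun z hz => (iterWithin_eq_iter hs hz m).symm
  have h3 : DifferentiableAt ℝ (iteratedDeriv m f) x := h2.congr_of_eventuallyEq heq
  simpa [← iteratedDeriv_succ] using h3.hasDerivAt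

private lemma contOn_iterDeriv {f : ℝ → ℝ} {s : Set ℝ} (hs : IsOpen s)
    (hf : ContDiffOn ℝ 4 f s) {m : ℕ} (hm : m ≤ 4) :
    ContinuousOn (iteratedDeriv m f) s :=
  (hf.continuousOn_iteratedDerivWithin (by exact_mod_cast hm) hs.uniqueDiffOn).congr
    fun z hz => (iterWithin_eq_iter hs hz m).symm

set_option maxHeartbeats 1000000
open Set intervalIntegral

private lemma simpson_core (f f1 f2 f3 f4 : ℝ → ℝ) (c h : ℝ) (hh : 0 < h)
    (hcont : ContinuousOn f (Set.Icc (c - h) (c + h)))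
    (hd0 : ∀ x ∈ Set.Ioo (c - h) (c + h), HasDerivAt f (f1 x) x)
    (hd1 : ∀ x ∈ Set.Ioo (c - h) (c + h), HasDerivAt f1 (f2 x) x)
    (hd2 : ∀ x ∈ Set.Ioo (c - h) (c + h), HasDerivAt f2 (f3 x) x)
    (hd3 : ∀ x ∈ Set.Ioo (c - h) (c + h), HasDerivAt f3 (f4 x) x) :
    ∃ ξ ∈ Set.Ioo (c - h) (c + h),
      ∫ x in (c - h)..(c + h), f x
        = h / 3 * (f (c - h) + 4 * f c + f (c + h)) - h ^ 5 / 90 * f4 ξ := by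
  have hab : c - h < c + h := by linarith
  -- integrability
  have hInt : ∀ u ∈ Icc (c - h) (c + h), ∀ v ∈ Icc (c - h) (c + h),
      IntervalIntegrable f MeasureTheory.volume u v := by
    intro u hu v hv
    apply ContinuousOn.intervalIntegrable
    apply hcont.mono
    have h1 : u ∈ uIcc (c - h) (c + h) := by rwa [Set.uIcc_of_le hab.le]
    have h2 : v ∈ uIcc (c - h) (c + h) := by rwa [Set.uIcc_of_le hab.le]
    calc uIcc u v ⊆ uIcc (c - h) (c + h) := Set.uIcc_subset_uIcc h1 h2
      _ = Icc (c - h) (c + h) := Set.uIcc_of_le hab.le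
  set P : ℝ → ℝ := fun u => ∫ x in c..u, f x with hP
  have hcmem : c ∈ Icc (c - h) (c + h) := by constructor <;> linarith
  -- continuity of the primitive
  have hPcont : ContinuousOn P (Icc (c - h) (c + h)) := by
    have := continuousOn_primitive_interval'
      (μ := MeasureTheory.volume) (f := f) (b₁ := c - h) (b₂ := c + h) (a := c)
      (hInt _ (by constructor <;> linarith) _ (by constructor <;> linarith))
      (by rwa [Set.uIcc_of_le hab.le])
    rwa [Set.uIcc_of_le hab.le] at this
  -- FTC
  have hPderiv : ∀ u ∈ Ioo (c - h) (c + h), HasDerivAt P (f u) u := by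
    intro u hu
    exact integral_hasDerivAt_right
      (hInt c hcmem u (Ioo_subset_Icc_self hu))
      (ContinuousAt.stronglyMeasurableAtFilter isOpen_Ioo
        (fun x hx => (hd0 x hx).continuousAt) u hu)
      (hd0 u hu).continuousAt
  -- the auxiliary function F and its derivatives
  set F : ℝ → ℝ := fun t => P (c + t) - P (c - t)
      - t / 3 * (f (c - t) + 4 * f c + f (c + t)) with hF
  set K : ℝ := F h / h ^ 5 with hK
  have hmemp : ∀ t, 0 ≤ t → t < h → c + t ∈ Ioo (c - h) (c + h) := by
    intro t h1 h2; constructor <;> linarith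
  have hmemm : ∀ t, 0 ≤ t → t < h → c - t ∈ Ioo (c - h) (c + h) := by
    intro t h1 h2; constructor <;> linarith
  -- derivative of F on (0, h)
  have hFd : ∀ t ∈ Ioo (0 : ℝ) h, HasDerivAt F
      (f (c + t) + f (c - t) - 1 / 3 * (f (c - t) + 4 * f c + f (c + t))
        - t / 3 * (f1 (c + t) - f1 (c - t))) t := by
    intro t ht
    have mp := hmemp t ht.1.le ht.2
    have mm := hmemm t ht.1.le ht.2
    have h1 : HasDerivAt (fun t => P (c + t)) (f (c + t)) t := by
      simpa [Function.comp_def] using (hPderiv _ mp).comp t ((hasDerivAt_id t).const_add c)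
    have h2 : HasDerivAt (fun t => P (c - t)) (-f (c - t)) t := by
      simpa [Function.comp_def] using (hPderiv _ mm).comp t ((hasDerivAt_id t).const_sub c)
    have hfp : HasDerivAt (fun t => f (c + t)) (f1 (c + t)) t := by
      simpa [Function.comp_def] using (hd0 _ mp).comp t ((hasDerivAt_id t).const_add c)
    have hfm : HasDerivAt (fun t => f (c - t)) (-f1 (c - t)) t := by
      simpa [Function.comp_def] using (hd0 _ mm).comp t ((hasDerivAt_id t).const_sub c)
    have hA : HasDerivAt (fun t : ℝ => t / 3 * (f (c - t) + 4 * f c + f (c + t)))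
        (1 / 3 * (f (c - t) + 4 * f c + f (c + t))
          + t / 3 * (-f1 (c - t) + f1 (c + t))) t := by
      have := ((hasDerivAt_id t).div_const 3).mul ((hfm.add_const (4 * f c)).add hfp)
      exact this.congr_deriv (by simp only [Pi.add_apply, id])
    have := (h1.sub h2).sub hA
    exact this.congr_deriv (by ring)
  -- second derivative of F-part
  have hFdd : ∀ t ∈ Ioo (0 : ℝ) h, HasDerivAt
      (fun t => f (c + t) + f (c - t) - 1 / 3 * (f (c - t) + 4 * f c + f (c + t))
        - t / 3 * (f1 (c + t) - f1 (c - t)))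
      (1 / 3 * (f1 (c + t) - f1 (c - t)) - t / 3 * (f2 (c + t) + f2 (c - t))) t := by
    intro t ht
    have mp := hmemp t ht.1.le ht.2
    have mm := hmemm t ht.1.le ht.2
    have hfp : HasDerivAt (fun t => f (c + t)) (f1 (c + t)) t := by
      simpa [Function.comp_def] using (hd0 _ mp).comp t ((hasDerivAt_id t).const_add c)
    have hfm : HasDerivAt (fun t => f (c - t)) (-f1 (c - t)) t := by
      simpa [Function.comp_def] using (hd0 _ mm).comp t ((hasDerivAt_id t).const_sub c)
    have hf1p : HasDerivAt (fun t => f1 (c + t)) (f2 (c + t)) t := by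
      simpa [Function.comp_def] using (hd1 _ mp).comp t ((hasDerivAt_id t).const_add c)
    have hf1m : HasDerivAt (fun t => f1 (c - t)) (-f2 (c - t)) t := by
      simpa [Function.comp_def] using (hd1 _ mm).comp t ((hasDerivAt_id t).const_sub c)
    have hA : HasDerivAt (fun t : ℝ => t / 3 * (f1 (c + t) - f1 (c - t)))
        (1 / 3 * (f1 (c + t) - f1 (c - t)) + t / 3 * (f2 (c + t) - -f2 (c - t))) t :=
      ((hasDerivAt_id t).div_const 3).mul (hf1p.sub hf1m)
    have := ((hfp.add hfm).sub ((hfm.add_const (4 * f c)).add hfp |>.const_mul (1 / 3))).sub hA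
    exact this.congr_deriv (by ring)
  -- third derivative of F-part
  have hFddd : ∀ t ∈ Ioo (0 : ℝ) h, HasDerivAt
      (fun t => 1 / 3 * (f1 (c + t) - f1 (c - t)) - t / 3 * (f2 (c + t) + f2 (c - t)))
      (-(t / 3) * (f3 (c + t) - f3 (c - t))) t := by
    intro t ht
    have mp := hmemp t ht.1.le ht.2
    have mm := hmemm t ht.1.le ht.2
    have hf1p : HasDerivAt (fun t => f1 (c + t)) (f2 (c + t)) t := by
      simpa [Function.comp_def] using (hd1 _ mp).comp t ((hasDerivAt_id t).const_add c)
    have hf1m : HasDerivAt (fun t => f1 (c - t)) (-f2 (c - t)) t := by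
      simpa [Function.comp_def] using (hd1 _ mm).comp t ((hasDerivAt_id t).const_sub c)
    have hf2p : HasDerivAt (fun t => f2 (c + t)) (f3 (c + t)) t := by
      simpa [Function.comp_def] using (hd2 _ mp).comp t ((hasDerivAt_id t).const_add c)
    have hf2m : HasDerivAt (fun t => f2 (c - t)) (-f3 (c - t)) t := by
      simpa [Function.comp_def] using (hd2 _ mm).comp t ((hasDerivAt_id t).const_sub c)
    have hA : HasDerivAt (fun t : ℝ => t / 3 * (f2 (c + t) + f2 (c - t)))
        (1 / 3 * (f2 (c + t) + f2 (c - t)) + t / 3 * (f3 (c + t) + -f3 (c - t))) t :=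
      ((hasDerivAt_id t).div_const 3).mul (hf2p.add hf2m)
    have := ((hf1p.sub hf1m).const_mul (1 / 3)).sub hA
    exact this.congr_deriv (by ring)
  -- continuity of pieces
  have hfIoo : ContinuousOn f (Ioo (c - h) (c + h)) :=
    fun x hx => (hd0 x hx).continuousAt.continuousWithinAt
  have hf1Ioo : ContinuousOn f1 (Ioo (c - h) (c + h)) :=
    fun x hx => (hd1 x hx).continuousAt.continuousWithinAt
  have hf2Ioo : ContinuousOn f2 (Ioo (c - h) (c + h)) :=
    fun x hx => (hd2 x hx).continuousAt.continuousWithinAt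
  have hf3Ioo : ContinuousOn f3 (Ioo (c - h) (c + h)) :=
    fun x hx => (hd3 x hx).continuousAt.continuousWithinAt
  have hcp : Continuous (fun t : ℝ => c + t) := continuous_const.add continuous_id
  have hcm : Continuous (fun t : ℝ => c - t) := continuous_const.sub continuous_id
  -- continuity of F on [0, h]
  have hFcont : ContinuousOn F (Icc 0 h) := by
    have hmap1 : MapsTo (fun t : ℝ => c + t) (Icc 0 h) (Icc (c - h) (c + h)) := by
      intro t ht
      simp only [Set.mem_Icc] at *
      constructor <;> linarith [ht.1, ht.2]
    have hmap2 : MapsTo (fun t : ℝ => c - t) (Icc 0 h) (Icc (c - h) (c + h)) := by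
      intro t ht
      simp only [Set.mem_Icc] at *
      constructor <;> linarith [ht.1, ht.2]
    have c1 : ContinuousOn (fun t : ℝ => P (c + t)) (Icc 0 h) :=
      hPcont.comp hcp.continuousOn hmap1
    have c2 : ContinuousOn (fun t : ℝ => P (c - t)) (Icc 0 h) :=
      hPcont.comp hcm.continuousOn hmap2
    have c3 : ContinuousOn (fun t : ℝ => f (c - t)) (Icc 0 h) :=
      hcont.comp hcm.continuousOn hmap2
    have c4 : ContinuousOn (fun t : ℝ => f (c + t)) (Icc 0 h) :=
      hcont.comp hcp.continuousOn hmap1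
    exact (c1.sub c2).sub ((continuousOn_id.div_const 3).mul
      ((c3.add continuousOn_const).add c4))
  -- first Rolle step on [0, h]
  obtain ⟨xi1, hxi1, e1⟩ := exists_hasDerivAt_eq_slope
    (fun t => F t - K * t ^ 5)
    (fun t => (f (c + t) + f (c - t) - 1 / 3 * (f (c - t) + 4 * f c + f (c + t))
        - t / 3 * (f1 (c + t) - f1 (c - t))) - K * (5 * t ^ 4))
    hh
    (hFcont.sub (continuousOn_const.mul (continuous_pow 5).continuousOn))
    (by
      intro t ht
      have hp : HasDerivAt (fun t : ℝ => K * t ^ 5) (K * (5 * t ^ 4)) t := by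
        simpa using (hasDerivAt_pow 5 t).const_mul K
      exact (hFd t ht).sub hp)
  have hF0 : F 0 = 0 := by simp [hF]
  have hFh : F h - K * h ^ 5 = 0 := by
    rw [hK]; field_simp; ring
  have e1' : (f (c + xi1) + f (c - xi1) - 1 / 3 * (f (c - xi1) + 4 * f c + f (c + xi1))
      - xi1 / 3 * (f1 (c + xi1) - f1 (c - xi1))) - K * (5 * xi1 ^ 4) = 0 := by
    have := e1
    simp only [hF0, hFh] at this
    simpa using this
  -- second Rolle step on [0, xi1]
  have hsub1 : Ioo (0 : ℝ) xi1 ⊆ Ioo (0 : ℝ) h := Ioo_subset_Ioo le_rfl hxi1.2.le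
  have hmapsIoo : ∀ (ξ : ℝ), ξ < h → MapsTo (fun t : ℝ => c + t) (Icc 0 ξ) (Ioo (c - h) (c + h))
      ∧ MapsTo (fun t : ℝ => c - t) (Icc 0 ξ) (Ioo (c - h) (c + h)) := by
    intro ξ hξ
    constructor <;> intro t ht <;>
      · simp only [Set.mem_Icc] at ht
        simp only [Set.mem_Ioo]
        constructor <;> linarith [ht.1, ht.2]
  obtain ⟨xi2, hxi2, e2⟩ := exists_hasDerivAt_eq_slope
    (fun t => (f (c + t) + f (c - t) - 1 / 3 * (f (c - t) + 4 * f c + f (c + t))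
        - t / 3 * (f1 (c + t) - f1 (c - t))) - K * (5 * t ^ 4))
    (fun t => (1 / 3 * (f1 (c + t) - f1 (c - t)) - t / 3 * (f2 (c + t) + f2 (c - t)))
        - K * (20 * t ^ 3))
    hxi1.1
    (by
      obtain ⟨hm1, hm2⟩ := hmapsIoo xi1 hxi1.2
      have c4 : ContinuousOn (fun t : ℝ => f (c + t)) (Icc 0 xi1) :=
        hfIoo.comp hcp.continuousOn hm1
      have c3 : ContinuousOn (fun t : ℝ => f (c - t)) (Icc 0 xi1) :=
        hfIoo.comp hcm.continuousOn hm2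
      have c5 : ContinuousOn (fun t : ℝ => f1 (c + t)) (Icc 0 xi1) :=
        hf1Ioo.comp hcp.continuousOn hm1
      have c6 : ContinuousOn (fun t : ℝ => f1 (c - t)) (Icc 0 xi1) :=
        hf1Ioo.comp hcm.continuousOn hm2
      exact (((c4.add c3).sub (continuousOn_const.mul ((c3.add continuousOn_const).add c4))).sub
        ((continuousOn_id.div_const 3).mul (c5.sub c6))).sub
        (continuousOn_const.mul (continuousOn_const.mul (continuous_pow 4).continuousOn)))
    (by
      intro t ht
      have hp : HasDerivAt (fun t : ℝ => K * (5 * t ^ 4)) (K * (20 * t ^ 3)) t := by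
        have := ((hasDerivAt_pow 4 t).const_mul (5 : ℝ)).const_mul K
        exact this.congr_deriv (by push_cast; ring)
      exact (hFdd t (hsub1 ht)).sub hp)
  have e2' : (1 / 3 * (f1 (c + xi2) - f1 (c - xi2)) - xi2 / 3 * (f2 (c + xi2) + f2 (c - xi2)))
      - K * (20 * xi2 ^ 3) = 0 := by
    have h0 : (f (c + (0:ℝ)) + f (c - 0) - 1 / 3 * (f (c - 0) + 4 * f c + f (c + 0))
        - 0 / 3 * (f1 (c + 0) - f1 (c - 0))) - K * (5 * (0:ℝ) ^ 4) = 0 := by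
      norm_num; ring
    have := e2
    simp only [e1', h0] at this
    simpa using this
  -- third Rolle step on [0, xi2]
  have hsub2 : Ioo (0 : ℝ) xi2 ⊆ Ioo (0 : ℝ) h :=
    Ioo_subset_Ioo le_rfl (by linarith [hxi2.2, hxi1.2])
  obtain ⟨xi3, hxi3, e3⟩ := exists_hasDerivAt_eq_slope
    (fun t => (1 / 3 * (f1 (c + t) - f1 (c - t)) - t / 3 * (f2 (c + t) + f2 (c - t)))
        - K * (20 * t ^ 3))
    (fun t => (-(t / 3) * (f3 (c + t) - f3 (c - t))) - K * (60 * t ^ 2))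
    hxi2.1
    (by
      obtain ⟨hm1, hm2⟩ := hmapsIoo xi2 (by linarith [hxi2.2, hxi1.2])
      have c5 : ContinuousOn (fun t : ℝ => f1 (c + t)) (Icc 0 xi2) :=
        hf1Ioo.comp hcp.continuousOn hm1
      have c6 : ContinuousOn (fun t : ℝ => f1 (c - t)) (Icc 0 xi2) :=
        hf1Ioo.comp hcm.continuousOn hm2
      have c7 : ContinuousOn (fun t : ℝ => f2 (c + t)) (Icc 0 xi2) :=
        hf2Ioo.comp hcp.continuousOn hm1
      have c8 : ContinuousOn (fun t : ℝ => f2 (c - t)) (Icc 0 xi2) :=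
        hf2Ioo.comp hcm.continuousOn hm2
      exact ((continuousOn_const.mul (c5.sub c6)).sub
        ((continuousOn_id.div_const 3).mul (c7.add c8))).sub
        (continuousOn_const.mul (continuousOn_const.mul (continuous_pow 3).continuousOn)))
    (by
      intro t ht
      have hp : HasDerivAt (fun t : ℝ => K * (20 * t ^ 3)) (K * (60 * t ^ 2)) t := by
        have := ((hasDerivAt_pow 3 t).const_mul (20 : ℝ)).const_mul K
        exact this.congr_deriv (by push_cast; ring)
      exact (hFddd t (hsub2 ht)).sub hp)
  have e3' : -(xi3 / 3) * (f3 (c + xi3) - f3 (c - xi3)) - K * (60 * xi3 ^ 2) = 0 := by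
    have h0 : (1 / 3 * (f1 (c + (0:ℝ)) - f1 (c - 0)) - 0 / 3 * (f2 (c + 0) + f2 (c - 0)))
        - K * (20 * (0:ℝ) ^ 3) = 0 := by norm_num
    have := e3
    simp only [e2', h0] at this
    simpa using this
  -- mean value theorem for f3 on [c - xi3, c + xi3]
  have hx3pos : 0 < xi3 := hxi3.1
  have hx3h : xi3 < h := by linarith [hxi3.2, hxi2.2, hxi1.2]
  obtain ⟨eta, heta, eeta⟩ := exists_hasDerivAt_eq_slope f3 f4
    (show c - xi3 < c + xi3 by linarith)
    (hf3Ioo.mono (fun z hz => ⟨by simp only [mem_Icc] at hz; linarith [hz.1],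
      by simp only [mem_Icc] at hz; linarith [hz.2]⟩))
    (fun x hx => hd3 x ⟨by linarith [hx.1], by linarith [hx.2]⟩)
  have h2xi : c + xi3 - (c - xi3) = 2 * xi3 := by ring
  rw [h2xi] at eeta
  have hdiff : f3 (c + xi3) - f3 (c - xi3) = f4 eta * (2 * xi3) := by
    rw [eeta]
    field_simp
  rw [hdiff] at e3'
  have hK90 : K = -(f4 eta) / 90 := by
    have h2 : K * (60 * xi3 ^ 2) = (-(f4 eta) / 90) * (60 * xi3 ^ 2) := by
      linear_combination (-1 : ℝ) * e3'
    exact mul_right_cancel₀ (by positivity) h2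
  -- conclusion
  have hIh : ∫ x in (c - h)..(c + h), f x = P (c + h) - P (c - h) := by
    have t1 : IntervalIntegrable f MeasureTheory.volume (c - h) c :=
      hInt _ ⟨le_refl _, by linarith⟩ _ hcmem
    have t2 : IntervalIntegrable f MeasureTheory.volume c (c + h) :=
      hInt _ hcmem _ ⟨by linarith, le_refl _⟩
    rw [← integral_add_adjacent_intervals t1 t2, integral_symm c (c - h)]
    simp only [hP]
    ring
  have hFh' : F h = P (c + h) - P (c - h) - h / 3 * (f (c - h) + 4 * f c + f (c + h)) := rfl
  have hFhval : P (c + h) - P (c - h) - h / 3 * (f (c - h) + 4 * f c + f (c + h))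
      = -(f4 eta) / 90 * h ^ 5 := by
    rw [← hFh']
    have : F h = K * h ^ 5 := by linarith
    rw [this, hK90]
  refine ⟨eta, ⟨by linarith [heta.1], by linarith [heta.2]⟩, ?_⟩
  rw [hIh]
  linear_combination hFhval

private lemma sum_shape (g : ℕ → ℝ) (m : ℕ) (hm : 1 ≤ m) :
    ∑ k ∈ Finset.range m, (g k + g (k + 1))
      = g 0 + 2 * ∑ j ∈ Finset.Icc 1 (m - 1), g j + g m := by
  induction m with
  | zero => omega
  | succ p ih =>
    rcases Nat.eq_zero_or_pos p with hp | hp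
    · subst hp
      simp
    · have hp1 : p - 1 + 1 = p := Nat.succ_pred_eq_of_pos hp
      have htop : ∑ j ∈ Finset.Icc 1 p, g j = ∑ j ∈ Finset.Icc 1 (p - 1), g j + g p := by
        conv_lhs => rw [← hp1]
        rw [Finset.sum_Icc_succ_top (by omega), hp1]
      rw [Finset.sum_range_succ, ih hp]
      simp only [Nat.add_sub_cancel, htop]
      ring

private lemma sum_mid (g : ℕ → ℝ) (m : ℕ) :
    ∑ k ∈ Finset.range m, g (k + 1) = ∑ j ∈ Finset.Icc 1 m, g j := by
  induction m with
  | zero => simp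
  | succ p ih => rw [Finset.sum_range_succ, ih, Finset.sum_Icc_succ_top (by omega)]

theorem stmt11 (n : ℕ) (hn : Even n) (hn0 : 0 < n) (tf : ℝ) (htf : 0 < tf)
    (h : ℝ) (hh : h = tf / n) (y : ℝ → ℝ)
    (hy : ContDiffOn ℝ 4 y (Set.Icc (0 : ℝ) tf)) :
    ∃ μ ∈ Set.Ioo (0 : ℝ) tf,
      ∫ t in (0:ℝ)..tf, y t
        = h / 3 * (y 0 + 2 * ∑ j ∈ Finset.Icc 1 (n / 2 - 1), y ((2 * j : ℝ) * h)
            + 4 * ∑ j ∈ Finset.Icc 1 (n / 2), y ((2 * j - 1 : ℝ) * h) + y tf)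
          - tf / 180 * h ^ 4 * iteratedDerivWithin 4 y (Set.Icc (0 : ℝ) tf) μ := by
  classical
  obtain ⟨r, hr⟩ := hn
  set m := n / 2 with hmdef
  have hn2 : n = 2 * m := by omega
  have hm1 : 1 ≤ m := by omega
  have hnR : (n : ℝ) ≠ 0 := Nat.cast_ne_zero.mpr hn0.ne'
  have hhpos : 0 < h := by rw [hh]; positivity
  have hnh : (n : ℝ) * h = tf := by rw [hh]; field_simp
  have h2mh : 2 * (m : ℝ) * h = tf := by
    rw [← hnh, hn2]; push_cast; ring
  have hyO : ContDiffOn ℝ 4 y (Ioo (0:ℝ) tf) := hy.mono Set.Ioo_subset_Icc_self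
  have hycont : ContinuousOn y (Icc (0:ℝ) tf) := hy.continuousOn
  have hd0 : ∀ x ∈ Ioo (0:ℝ) tf, HasDerivAt y (iteratedDeriv 1 y x) x := by
    intro x hx
    have := hasDerivAt_iterDeriv isOpen_Ioo hyO (m := 0) (by norm_num) hx
    simpa [iteratedDeriv_zero] using this
  have hd1 : ∀ x ∈ Ioo (0:ℝ) tf,
      HasDerivAt (iteratedDeriv 1 y) (iteratedDeriv 2 y x) x :=
    fun x hx => hasDerivAt_iterDeriv isOpen_Ioo hyO (m := 1) (by norm_num) hx
  have hd2 : ∀ x ∈ Ioo (0:ℝ) tf,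
      HasDerivAt (iteratedDeriv 2 y) (iteratedDeriv 3 y x) x :=
    fun x hx => hasDerivAt_iterDeriv isOpen_Ioo hyO (m := 2) (by norm_num) hx
  have hd3 : ∀ x ∈ Ioo (0:ℝ) tf,
      HasDerivAt (iteratedDeriv 3 y) (iteratedDeriv 4 y x) x :=
    fun x hx => hasDerivAt_iterDeriv isOpen_Ioo hyO (m := 3) (by norm_num) hx
  set a : ℕ → ℝ := fun j => 2 * (j : ℝ) * h with ha
  have hbound : ∀ k : ℕ, k < m → 0 ≤ a k ∧ a (k + 1) ≤ tf := by
    intro k hk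
    have hk1 : ((k : ℝ) + 1) ≤ (m : ℝ) := by exact_mod_cast Nat.succ_le_of_lt hk
    constructor
    · simp only [ha]; positivity
    · simp only [ha]; push_cast; nlinarith [hhpos.le]
  have hak1 : ∀ k : ℕ, a (k + 1) = a k + 2 * h := by
    intro k; simp only [ha]; push_cast; ring
  have key : ∀ k : ℕ, ∃ ξ : ℝ, k < m →
      ξ ∈ Ioo (a k) (a (k + 1)) ∧
      ∫ x in (a k)..(a (k + 1)), y x
        = h / 3 * (y (a k) + 4 * y (a k + h) + y (a (k + 1)))
          - h ^ 5 / 90 * iteratedDeriv 4 y ξ := by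
    intro k
    by_cases hk : k < m
    swap
    · exact ⟨0, fun hc => absurd hc hk⟩
    obtain ⟨h0k, htfk⟩ := hbound k hk
    have e1 : a k + h - h = a k := by ring
    have e2 : a k + h + h = a (k + 1) := by rw [hak1]; ring
    have hsub : Ioo (a k + h - h) (a k + h + h) ⊆ Ioo (0:ℝ) tf := by
      rw [e1, e2]
      intro z hz
      exact ⟨lt_of_le_of_lt h0k hz.1, lt_of_lt_of_le hz.2 htfk⟩
    obtain ⟨ξ, hmem, heq⟩ := simpson_core y (iteratedDeriv 1 y) (iteratedDeriv 2 y)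
      (iteratedDeriv 3 y) (iteratedDeriv 4 y) (a k + h) h hhpos
      (by rw [e1, e2]; exact hycont.mono (Icc_subset_Icc h0k htfk))
      (fun x hx => hd0 x (hsub hx))
      (fun x hx => hd1 x (hsub hx))
      (fun x hx => hd2 x (hsub hx))
      (fun x hx => hd3 x (hsub hx))
    rw [e1, e2] at hmem heq
    exact ⟨ξ, fun _ => ⟨hmem, heq⟩⟩
  choose ξ hξ using key
  -- integral splitting
  have hIntY : ∀ u v : ℝ, u ∈ Icc (0:ℝ) tf → v ∈ Icc (0:ℝ) tf →
      IntervalIntegrable y MeasureTheory.volume u v := by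
    intro u v hu hv
    apply ContinuousOn.intervalIntegrable
    apply hycont.mono
    have h1 : u ∈ uIcc (0:ℝ) tf := by rwa [Set.uIcc_of_le htf.le]
    have h2 : v ∈ uIcc (0:ℝ) tf := by rwa [Set.uIcc_of_le htf.le]
    calc uIcc u v ⊆ uIcc 0 tf := Set.uIcc_subset_uIcc h1 h2
      _ = Icc 0 tf := Set.uIcc_of_le htf.le
  have ha0 : a 0 = 0 := by simp only [ha]; norm_num
  have ham : a m = tf := by simp only [ha]; exact h2mh
  have hmemIcc : ∀ k : ℕ, k ≤ m → a k ∈ Icc (0:ℝ) tf := by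
    intro k hk
    have hkR : (k : ℝ) ≤ (m : ℝ) := by exact_mod_cast hk
    constructor
    · simp only [ha]; positivity
    · simp only [ha]; nlinarith [hhpos.le]
  have hsplit : ∑ k ∈ Finset.range m, ∫ x in (a k)..(a (k + 1)), y x
      = ∫ x in (0:ℝ)..tf, y x := by
    have := intervalIntegral.sum_integral_adjacent_intervals (a := a) (μ := MeasureTheory.volume)
      (f := y) (n := m)
      (fun k hk => hIntY _ _ (hmemIcc k (by omega)) (hmemIcc (k+1) (by omega)))
    rwa [ha0, ham] at this
  have total : ∫ t in (0:ℝ)..tf, y t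
      = h / 3 * ((∑ k ∈ Finset.range m, (y (a k) + y (a (k + 1))))
          + 4 * ∑ k ∈ Finset.range m, y (a k + h))
        - h ^ 5 / 90 * ∑ k ∈ Finset.range m, iteratedDeriv 4 y (ξ k) := by
    rw [← hsplit,
      Finset.sum_congr rfl (fun k hk => (hξ k (Finset.mem_range.mp hk)).2)]
    have expand : ∀ k : ℕ, h / 3 * (y (a k) + 4 * y (a k + h) + y (a (k + 1)))
        - h ^ 5 / 90 * iteratedDeriv 4 y (ξ k)
        = (h / 3) * y (a k) + (h / 3) * y (a (k + 1)) + (4 * h / 3) * y (a k + h)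
          - h ^ 5 / 90 * iteratedDeriv 4 y (ξ k) := fun k => by ring
    rw [Finset.sum_congr rfl (fun k _ => expand k)]
    simp only [Finset.sum_add_distrib, Finset.sum_sub_distrib, ← Finset.mul_sum]
    ring
  -- intermediate value argument
  have hξmem : ∀ k : ℕ, k < m → ξ k ∈ Ioo (0:ℝ) tf := by
    intro k hk
    obtain ⟨h0k, htfk⟩ := hbound k hk
    have := (hξ k hk).1
    exact ⟨lt_of_le_of_lt h0k this.1, lt_of_lt_of_le this.2 htfk⟩
  have hne : (Finset.range m).Nonempty := ⟨0, Finset.mem_range.mpr (by omega)⟩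
  obtain ⟨k1, hk1, hmin⟩ := Finset.exists_min_image (Finset.range m)
    (fun k => iteratedDeriv 4 y (ξ k)) hne
  obtain ⟨k2, hk2, hmax⟩ := Finset.exists_max_image (Finset.range m)
    (fun k => iteratedDeriv 4 y (ξ k)) hne
  set E := ∑ k ∈ Finset.range m, iteratedDeriv 4 y (ξ k) with hE
  have hmpos : (0:ℝ) < (m : ℝ) := by exact_mod_cast hm1
  have hcard : (Finset.range m).card = m := Finset.card_range m
  have hlow : (m : ℝ) * iteratedDeriv 4 y (ξ k1) ≤ E := by
    have := Finset.card_nsmul_le_sum (Finset.range m)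
      (fun k => iteratedDeriv 4 y (ξ k)) (iteratedDeriv 4 y (ξ k1)) (fun i hi => hmin i hi)
    rwa [hcard, nsmul_eq_mul] at this
  have hhigh : E ≤ (m : ℝ) * iteratedDeriv 4 y (ξ k2) := by
    have := Finset.sum_le_card_nsmul (Finset.range m)
      (fun k => iteratedDeriv 4 y (ξ k)) (iteratedDeriv 4 y (ξ k2)) (fun i hi => hmax i hi)
    rwa [hcard, nsmul_eq_mul] at this
  have hF4cont : ContinuousOn (iteratedDeriv 4 y) (Ioo (0:ℝ) tf) :=
    contOn_iterDeriv isOpen_Ioo hyO le_rfl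
  have hsubu : uIcc (ξ k1) (ξ k2) ⊆ Ioo (0:ℝ) tf :=
    (Set.ordConnected_Ioo).uIcc_subset (hξmem k1 (Finset.mem_range.mp hk1))
      (hξmem k2 (Finset.mem_range.mp hk2))
  have hAmem : E / (m : ℝ) ∈ uIcc (iteratedDeriv 4 y (ξ k1)) (iteratedDeriv 4 y (ξ k2)) := by
    rw [Set.uIcc_of_le (by
      have := hmin k2 hk2
      exact this)]
    constructor
    · rw [le_div_iff₀ hmpos]; linarith
    · rw [div_le_iff₀ hmpos]; linarith
  obtain ⟨μ, hμmem, hμeq⟩ := intermediate_value_uIcc (hF4cont.mono hsubu) hAmem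
  have hμIoo : μ ∈ Ioo (0:ℝ) tf := hsubu hμmem
  have hEval : E = (m : ℝ) * iteratedDeriv 4 y μ := by
    rw [hμeq]
    field_simp
  -- sum manipulations
  have hsum1 : ∑ k ∈ Finset.range m, (y (a k) + y (a (k + 1)))
      = y (a 0) + 2 * ∑ j ∈ Finset.Icc 1 (m - 1), y (a j) + y (a m) :=
    sum_shape (fun j => y (a j)) m hm1
  have hsum2 : ∑ k ∈ Finset.range m, y (a k + h)
      = ∑ j ∈ Finset.Icc 1 m, y ((2 * (j : ℝ) - 1) * h) := by
    rw [← sum_mid (fun j => y ((2 * (j : ℝ) - 1) * h)) m]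
    apply Finset.sum_congr rfl
    intro k _
    congr 1
    simp only [ha]
    push_cast
    ring
  have hcoeff : h ^ 5 / 90 * (m : ℝ) = tf / 180 * h ^ 4 := by
    linear_combination (h ^ 4 / 180) * h2mh
  refine ⟨μ, hμIoo, ?_⟩
  rw [within_Icc_eq_interior hμIoo 4]
  rw [total, hsum1, hsum2, hEval, ha0, ham]
  have haj : ∀ j : ℕ, a j = (2 * (j : ℝ)) * h := fun j => by simp only [ha]
  simp only [haj]
  linear_combination (-(iteratedDeriv 4 y μ * h ^ 4) / 180) * h2mh
end

section
/- The fractional integration operational matrix entry formula: for $\alpha > 0$ and $i \ge 1$, the quantity $\eta_i = 4[(i-1)^{\alpha+1}(i+1+\alpha) - (i+1)^{\alpha+1}(i-1-\alpha)]$ is positive for all integers $i \ge 1$ when $0 < \alpha < 1$. -/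
/-!
Put `r = α + 1` and `φ s = (x + s) ^ r * (x - r * s)`, so that the claim is `φ 1 < φ (-1)` at `x = i`.
Since `φ' s = -r (r + 1) s (x + s) ^ α`, the difference `G s = φ (-s) - φ s` has
`G' s = r (r + 1) s ((x + s) ^ α - (x - s) ^ α) > 0` for `0 < s < x`, and `G 0 = 0`.
-/

open Real Set

lemma hasDerivAt_rpow_succ_mul_sub {α x s : ℝ} (hs : 0 < x + s) :
    HasDerivAt (fun s => (x + s) ^ (α + 1) * (x - (α + 1) * s))
      (-((α + 1) * (α + 2)) * s * (x + s) ^ α) s := by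
  have hpow : HasDerivAt (fun s => (x + s) ^ (α + 1)) ((α + 1) * (x + s) ^ α) s := by
    simpa using ((hasDerivAt_id s).const_add x).rpow_const (p := α + 1) (Or.inl hs.ne')
  have hlin : HasDerivAt (fun s => x - (α + 1) * s) (-(α + 1)) s := by
    simpa using ((hasDerivAt_id s).const_mul (α + 1)).const_sub x
  refine (hpow.mul hlin).congr_deriv ?_
  rw [rpow_add_one hs.ne']
  ring

lemma rpow_succ_mul_sub_lt {α x h : ℝ} (hα : 0 < α) (hh : 0 < h) (hhx : h ≤ x) :
    (x + h) ^ (α + 1) * (x - (α + 1) * h) < (x - h) ^ (α + 1) * (x + (α + 1) * h) := by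
  set φ : ℝ → ℝ := fun s => (x + s) ^ (α + 1) * (x - (α + 1) * s) with hφ
  set G : ℝ → ℝ := fun s => φ (-s) - φ s
  have hG_deriv : ∀ s ∈ Ioo 0 h,
      HasDerivAt G ((α + 1) * (α + 2) * s * ((x + s) ^ α - (x - s) ^ α)) s := by
    intro s ⟨hs0, hsh⟩
    have hminus := (hasDerivAt_rpow_succ_mul_sub (α := α) (x := x) (s := -s)
      (by linarith)).comp s (hasDerivAt_neg s)
    have hplus := hasDerivAt_rpow_succ_mul_sub (α := α) (x := x) (s := s) (by linarith)
    refine (hminus.sub hplus).congr_deriv ?_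
    simp only [← sub_eq_add_neg]
    ring
  have hG_cont : Continuous G := by
    simp only [G, hφ]
    fun_prop (disch := linarith)
  have hG_mono : StrictMonoOn G (Icc 0 h) := by
    refine strictMonoOn_of_deriv_pos (convex_Icc 0 h) hG_cont.continuousOn fun s hs => ?_
    rw [interior_Icc] at hs
    obtain ⟨hs0, hsh⟩ := hs
    rw [(hG_deriv s ⟨hs0, hsh⟩).deriv]
    have : (x - s) ^ α < (x + s) ^ α := rpow_lt_rpow (by linarith) (by linarith) hα
    have : 0 < (α + 1) * (α + 2) * s := by positivity
    nlinarith
  have hG0 : G 0 = 0 := by simp [G]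
  have hG_pos : 0 < G h := hG0 ▸ hG_mono ⟨le_refl 0, hh.le⟩ ⟨hh.le, le_refl h⟩ hh
  simp only [G, hφ, ← sub_eq_add_neg, mul_neg, sub_neg_eq_add] at hG_pos
  linarith

theorem stmt15_general (α : ℝ) (hα0 : 0 < α) (i : ℕ) (hi : 1 ≤ i) :
    0 < 4 * (((i : ℝ) - 1) ^ (α + 1) * ((i : ℝ) + 1 + α)
        - ((i : ℝ) + 1) ^ (α + 1) * ((i : ℝ) - 1 - α)) := by
  have key := rpow_succ_mul_sub_lt (x := (i : ℝ)) hα0 one_pos (by exact_mod_cast hi)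
  have hplus : (i : ℝ) + (α + 1) * 1 = i + 1 + α := by ring
  have hminus : (i : ℝ) - (α + 1) * 1 = i - 1 - α := by ring
  rw [hplus, hminus] at key
  linarith

theorem stmt15 (α : ℝ) (hα0 : 0 < α) (hα1 : α < 1) (i : ℕ) (hi : 1 ≤ i) :
    0 < 4 * (((i : ℝ) - 1) ^ (α + 1) * ((i : ℝ) + 1 + α)
        - ((i : ℝ) + 1) ^ (α + 1) * ((i : ℝ) - 1 - α)) :=
  stmt15_general α hα0 i hi
end
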